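/- Let X be a totally positive 4×4 real matrix and write Δ_{I,J} for its 2×2 minors. Then the system of two equations Δ₁₃,₁₂·xy + Δ₁₄,₁₂·x + Δ₂₃,₁₂·y + Δ₂₄,₁₂ = 0 and Δ₁₃,₃₄·xy + Δ₁₄,₃₄·x + Δ₂₃,₃₄·y + Δ₂₄,₃₄ = 0 has two distinct real solutions, i.e., there exist pairs (x₁,y₁) ≠ (x₂,y₂) of real numbers each satisfying both equations. -/

import Mathlib

/-- A 4×4 real matrix is totally positive if every minor (determinant of every square
submatrix given by increasing choices of rows and columns) is strictly positive. -/
def TotallyPositive (X : Matrix (Fin 4) (Fin 4) ℝ) : Prop :=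
  ∀ (k : ℕ) (r c : Fin k → Fin 4), StrictMono r → StrictMono c →
    0 < (X.submatrix r c).det

/-- `Δ_{i₁i₂,j₁j₂}`: the 2×2 minor of `X` with rows `i₁ < i₂` and columns `j₁ < j₂`
(indices here are 0-based). -/
def minor2 (X : Matrix (Fin 4) (Fin 4) ℝ) (i₁ i₂ j₁ j₂ : Fin 4) : ℝ :=
  X i₁ j₁ * X i₂ j₂ - X i₁ j₂ * X i₂ j₁

/-!
Write the two equations as `A xy + B x + C y + D = 0` and `A' xy + B' x + C' y + D' = 0`.
Eliminating `y = -(B x + D) / (A x + C)` leaves the quadratic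
`(A x + C)(B' x + D') = (A' x + C')(B x + D)` with leading coefficient `A B' - A' B`.
At the pole `x₀ = -C/A` its value has the sign of `-(A C' - A' C)(A D - B C)`, so as soon as
`A > 0`, `A B' > A' B`, `A C' > A' C` and `A D > B C` it has two distinct real roots, neither
equal to `x₀`.

For a totally positive `X`, `A D - B C = Δ₁₂,₁₂ Δ₃₄,₁₂` by the three-term Plücker relation.
The inequality `A C' > A' C` says that `Δ₁₃,J / Δ₂₃,J` decreases from `J = 12` to `J = 34`.
This holds for `Δ_{as,J} / Δ_{bs,J}` with any rows `a < b < s`, step by step along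
`J = 12, 13, 14, 24, 34`: consecutive pairs share a column `t`, and the Desnanot–Jacobi identity
writes each cross difference as `x_{st}` times a 3×3 minor. Reversing the order of rows and
columns turns `A B' > A' B` into the case `a, b, s = 1, 2, 4`.
-/

open Matrix

theorem exists_ne_quadratic_eq_zero_of_mul_neg {a b c x₀ : ℝ}
    (h : a * (a * (x₀ * x₀) + b * x₀ + c) < 0) :
    ∃ x₁ x₂, x₁ ≠ x₂ ∧ a * (x₁ * x₁) + b * x₁ + c = 0 ∧ a * (x₂ * x₂) + b * x₂ + c = 0 := by
  have ha : a ≠ 0 := by rintro rfl; simp at h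
  have hd : 0 < discrim a b c := by
    have : discrim a b c = (2 * a * x₀ + b) ^ 2 - 4 * (a * (a * (x₀ * x₀) + b * x₀ + c)) := by
      unfold discrim; ring
    rw [this]
    linarith [sq_nonneg (2 * a * x₀ + b)]
  set s := √(discrim a b c)
  have hs : discrim a b c = s * s := (Real.mul_self_sqrt hd.le).symm
  have hs0 : s ≠ 0 := (Real.sqrt_pos.2 hd).ne'
  refine ⟨(-b + s) / (2 * a), (-b - s) / (2 * a), ?_,
    (quadratic_eq_zero_iff ha hs _).2 (.inl rfl), (quadratic_eq_zero_iff ha hs _).2 (.inr rfl)⟩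
  rw [Ne, div_left_inj' (mul_ne_zero two_ne_zero ha)]
  intro h
  exact hs0 (by linarith)

theorem exists_bilinear_eq_zero_of_resultant_eq_zero {A B C D A' B' C' D' x : ℝ}
    (hx : A * x + C ≠ 0) (hR : (A * x + C) * (B' * x + D') = (A' * x + C') * (B * x + D)) :
    ∃ y, A * (x * y) + B * x + C * y + D = 0 ∧ A' * (x * y) + B' * x + C' * y + D' = 0 := by
  have hy : (A * x + C) * (-(B * x + D) / (A * x + C)) = -(B * x + D) := mul_div_cancel₀ _ hx
  refine ⟨-(B * x + D) / (A * x + C), by linear_combination hy, mul_left_cancel₀ hx ?_⟩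
  linear_combination (A' * x + C') * hy + hR

theorem exists_two_solutions_bilinear_system {A B C D A' B' C' D' : ℝ} (hA : 0 < A)
    (hB : A' * B < A * B') (hC : A' * C < A * C') (hD : B * C < A * D) :
    ∃ x₁ y₁ x₂ y₂ : ℝ, (x₁, y₁) ≠ (x₂, y₂) ∧
      A * (x₁ * y₁) + B * x₁ + C * y₁ + D = 0 ∧ A' * (x₁ * y₁) + B' * x₁ + C' * y₁ + D' = 0 ∧
      A * (x₂ * y₂) + B * x₂ + C * y₂ + D = 0 ∧ A' * (x₂ * y₂) + B' * x₂ + C' * y₂ + D' = 0 := by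
  set R : ℝ → ℝ := fun x ↦ (A * x + C) * (B' * x + D') - (A' * x + C') * (B * x + D)
  have hR : ∀ x, R x = (A * B' - A' * B) * (x * x) + (A * D' + C * B' - A' * D - C' * B) * x
      + (C * D' - C' * D) := fun x ↦ by ring
  set x₀ := -C / A
  have hpole : ∀ x, A * x + C = 0 ↔ x = x₀ := fun x ↦ by
    rw [eq_div_iff hA.ne']
    constructor <;> intro h <;> linarith
  have hAx₀ : A * x₀ + C = 0 := (hpole x₀).2 rfl
  have hRx₀ : R x₀ < 0 := by
    have h₁ : 0 < A' * x₀ + C' := by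
      have : A' * x₀ + C' = (A * C' - A' * C) / A := by
        rw [eq_div_iff hA.ne']; linear_combination A' * hAx₀
      rw [this]
      exact div_pos (by linarith) hA
    have h₂ : 0 < B * x₀ + D := by
      have : B * x₀ + D = (A * D - B * C) / A := by
        rw [eq_div_iff hA.ne']; linear_combination B * hAx₀
      rw [this]
      exact div_pos (by linarith) hA
    have : R x₀ = -((A' * x₀ + C') * (B * x₀ + D)) := by simp [R, hAx₀]
    rw [this]
    exact neg_neg_of_pos (mul_pos h₁ h₂)
  obtain ⟨x₁, x₂, hne, h₁, h₂⟩ := exists_ne_quadratic_eq_zero_of_mul_neg (x₀ := x₀)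
    (by rw [← hR]; exact mul_neg_of_pos_of_neg (by linarith) hRx₀)
  have hsol : ∀ x, R x = 0 → ∃ y, A * (x * y) + B * x + C * y + D = 0 ∧
      A' * (x * y) + B' * x + C' * y + D' = 0 := by
    intro x hx
    refine exists_bilinear_eq_zero_of_resultant_eq_zero (fun h ↦ ?_) (sub_eq_zero.1 hx)
    rw [(hpole x).1 h] at hx
    exact hRx₀.ne hx
  obtain ⟨y₁, hy₁, hy₁'⟩ := hsol x₁ (by rw [hR]; exact h₁)
  obtain ⟨y₂, hy₂, hy₂'⟩ := hsol x₂ (by rw [hR]; exact h₂)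
  exact ⟨x₁, y₁, x₂, y₂, fun h ↦ hne (Prod.ext_iff.1 h).1, hy₁, hy₁', hy₂, hy₂'⟩

section Minors

variable (X : Matrix (Fin 4) (Fin 4) ℝ)

theorem minor2_plucker (a b c d j k : Fin 4) :
    minor2 X a c j k * minor2 X b d j k - minor2 X a d j k * minor2 X b c j k
      = minor2 X a b j k * minor2 X c d j k := by
  simp only [minor2]
  ring

theorem minor2_mul_sub_of_shared_first_col (a b s u v w : Fin 4) :
    minor2 X a s u v * minor2 X b s u w - minor2 X a s u w * minor2 X b s u v
      = X s u * (X.submatrix ![a, b, s] ![u, v, w]).det := by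
  rw [det_fin_three]
  simp [minor2]
  ring

theorem minor2_mul_sub_of_shared_last_col (a b s u v w : Fin 4) :
    minor2 X a s u w * minor2 X b s v w - minor2 X a s v w * minor2 X b s u w
      = X s w * (X.submatrix ![a, b, s] ![u, v, w]).det := by
  rw [det_fin_three]
  simp [minor2]
  ring

theorem minor2_submatrix_rev (i₁ i₂ j₁ j₂ : Fin 4) :
    minor2 (X.submatrix Fin.rev Fin.rev) i₁ i₂ j₁ j₂
      = minor2 X i₂.rev i₁.rev j₂.rev j₁.rev := by
  simp only [minor2, submatrix_apply]
  ring

end Minors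

namespace TotallyPositive

variable {X : Matrix (Fin 4) (Fin 4) ℝ} (hX : TotallyPositive X)
include hX

theorem entry_pos (i j : Fin 4) : 0 < X i j := by
  have h := hX 1 ![i] ![j] (Subsingleton.strictMono _) (Subsingleton.strictMono _)
  rwa [det_fin_one] at h

theorem minor2_pos {i₁ i₂ j₁ j₂ : Fin 4} (hi : i₁ < i₂) (hj : j₁ < j₂) :
    0 < minor2 X i₁ i₂ j₁ j₂ := by
  have h := hX 2 ![i₁, i₂] ![j₁, j₂] (by simp [Fin.strictMono_iff_lt_succ, hi])
    (by simp [Fin.strictMono_iff_lt_succ, hj])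
  rwa [det_fin_two] at h

theorem det_submatrix_three_pos {i₁ i₂ i₃ j₁ j₂ j₃ : Fin 4} (hi₁ : i₁ < i₂) (hi₂ : i₂ < i₃)
    (hj₁ : j₁ < j₂) (hj₂ : j₂ < j₃) : 0 < (X.submatrix ![i₁, i₂, i₃] ![j₁, j₂, j₃]).det :=
  hX 3 _ _ (by simp [Fin.strictMono_iff_lt_succ, Fin.forall_fin_two, hi₁, hi₂])
    (by simp [Fin.strictMono_iff_lt_succ, Fin.forall_fin_two, hj₁, hj₂])

theorem submatrix_rev : TotallyPositive (X.submatrix Fin.rev Fin.rev) := by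
  intro k r c hr hc
  have hrev : ∀ {f : Fin k → Fin 4}, StrictMono f → StrictMono (Fin.rev ∘ f ∘ Fin.rev) :=
    fun hf _ _ h ↦ Fin.rev_lt_rev.2 (hf (Fin.rev_lt_rev.2 h))
  rw [← det_submatrix_equiv_self Fin.revPerm]
  convert hX k _ _ (hrev hr) (hrev hc) using 2
  ext i j
  simp

section Ratio

variable {a b s u v w : Fin 4} (hab : a < b) (hbs : b < s) (huv : u < v) (hvw : v < w)
include hab hbs huv hvw

theorem minor2_div_lt_of_shared_first_col :
    minor2 X a s u w / minor2 X b s u w < minor2 X a s u v / minor2 X b s u v := by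
  rw [div_lt_div_iff₀ (hX.minor2_pos hbs (huv.trans hvw)) (hX.minor2_pos hbs huv), ← sub_pos,
    minor2_mul_sub_of_shared_first_col]
  exact mul_pos (hX.entry_pos s u) (hX.det_submatrix_three_pos hab hbs huv hvw)

theorem minor2_div_lt_of_shared_last_col :
    minor2 X a s v w / minor2 X b s v w < minor2 X a s u w / minor2 X b s u w := by
  rw [div_lt_div_iff₀ (hX.minor2_pos hbs hvw) (hX.minor2_pos hbs (huv.trans hvw)), ← sub_pos,
    minor2_mul_sub_of_shared_last_col]
  exact mul_pos (hX.entry_pos s w) (hX.det_submatrix_three_pos hab hbs huv hvw)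

end Ratio

theorem minor2_cross_lt {a b s : Fin 4} (hab : a < b) (hbs : b < s) :
    minor2 X a s 2 3 * minor2 X b s 0 1 < minor2 X a s 0 1 * minor2 X b s 2 3 := by
  have hratio : minor2 X a s 2 3 / minor2 X b s 2 3 < minor2 X a s 0 1 / minor2 X b s 0 1 :=
    calc minor2 X a s 2 3 / minor2 X b s 2 3
        < minor2 X a s 1 3 / minor2 X b s 1 3 :=
          hX.minor2_div_lt_of_shared_last_col hab hbs (by decide) (by decide)
      _ < minor2 X a s 0 3 / minor2 X b s 0 3 :=
          hX.minor2_div_lt_of_shared_last_col hab hbs (by decide) (by decide)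
      _ < minor2 X a s 0 2 / minor2 X b s 0 2 :=
          hX.minor2_div_lt_of_shared_first_col hab hbs (by decide) (by decide)
      _ < minor2 X a s 0 1 / minor2 X b s 0 1 :=
          hX.minor2_div_lt_of_shared_first_col hab hbs (by decide) (by decide)
  rwa [div_lt_div_iff₀ (hX.minor2_pos hbs (by decide)) (hX.minor2_pos hbs (by decide))] at hratio

end TotallyPositive

/-- For a totally positive 4×4 real matrix `X`, the system
`Δ₁₃,₁₂ xy + Δ₁₄,₁₂ x + Δ₂₃,₁₂ y + Δ₂₄,₁₂ = 0` and
`Δ₁₃,₃₄ xy + Δ₁₄,₃₄ x + Δ₂₃,₃₄ y + Δ₂₄,₃₄ = 0`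
has two distinct real solutions. -/
theorem stmt7 (X : Matrix (Fin 4) (Fin 4) ℝ) (hX : TotallyPositive X) :
    ∃ x₁ y₁ x₂ y₂ : ℝ, (x₁, y₁) ≠ (x₂, y₂) ∧
      (minor2 X 0 2 0 1 * (x₁ * y₁) + minor2 X 0 3 0 1 * x₁
        + minor2 X 1 2 0 1 * y₁ + minor2 X 1 3 0 1 = 0) ∧
      (minor2 X 0 2 2 3 * (x₁ * y₁) + minor2 X 0 3 2 3 * x₁
        + minor2 X 1 2 2 3 * y₁ + minor2 X 1 3 2 3 = 0) ∧
      (minor2 X 0 2 0 1 * (x₂ * y₂) + minor2 X 0 3 0 1 * x₂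
        + minor2 X 1 2 0 1 * y₂ + minor2 X 1 3 0 1 = 0) ∧
      (minor2 X 0 2 2 3 * (x₂ * y₂) + minor2 X 0 3 2 3 * x₂
        + minor2 X 1 2 2 3 * y₂ + minor2 X 1 3 2 3 = 0) := by
  have hA := hX.minor2_pos (i₁ := 0) (i₂ := 2) (j₁ := 0) (j₂ := 1) (by decide) (by decide)
  have hB : minor2 X 0 3 0 1 * minor2 X 0 2 2 3 < minor2 X 0 3 2 3 * minor2 X 0 2 0 1 := by
    have h := hX.submatrix_rev.minor2_cross_lt (a := 0) (b := 1) (s := 3) (by decide) (by decide)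
    simp only [minor2_submatrix_rev] at h
    exact h
  have hC := hX.minor2_cross_lt (a := 0) (b := 1) (s := 2) (by decide) (by decide)
  have hD : minor2 X 0 3 0 1 * minor2 X 1 2 0 1 < minor2 X 0 2 0 1 * minor2 X 1 3 0 1 := by
    rw [← sub_pos, minor2_plucker]
    exact mul_pos (hX.minor2_pos (by decide) (by decide)) (hX.minor2_pos (by decide) (by decide))
  exact exists_two_solutions_bilinear_system hA (by linarith) hC hD
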